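/- A proper k-ideal P of a commutative semiring R is k-prime if and only if the complement R ∖ P is a multiplicatively closed subset of R. -/

import Mathlib

variable {R : Type*} [CommSemiring R]

/-- An ideal `I` of a commutative semiring is a *k-ideal* (subtractive ideal) if
`a ∈ I` and `a + b ∈ I` imply `b ∈ I`. -/
def IsKIdeal (I : Ideal R) : Prop :=
  ∀ a b : R, a ∈ I → a + b ∈ I → b ∈ I

/-- A *k-prime* ideal: a proper k-ideal `P` such that for all k-ideals `I`, `J`,
`I * J ≤ P` implies `I ≤ P` or `J ≤ P`. -/
def IsKPrime (P : Ideal R) : Prop :=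
  IsKIdeal P ∧ P ≠ ⊤ ∧
    ∀ I J : Ideal R, IsKIdeal I → IsKIdeal J → I * J ≤ P → I ≤ P ∨ J ≤ P

/- The forward direction is the only real work. If `a, b ∉ P` but `a * b ∈ P`, the principal
ideals `(a)` and `(b)` need not be k-ideals, so k-primality cannot be applied to them directly.
Their k-closures `{x | ∃ v ∈ I, v + x ∈ I}` are k-ideals, and for a k-ideal `P` the inclusion
`I * J ≤ P` survives passing to k-closures, because `kClosure I * J ≤ kClosure (I * J)`. -/

namespace Ideal

def kClosure (I : Ideal R) : Ideal R where
  carrier := {x | ∃ v ∈ I, v + x ∈ I}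
  zero_mem' := ⟨0, I.zero_mem, by rw [add_zero]; exact I.zero_mem⟩
  add_mem' := by
    rintro x y ⟨v, hv, hvx⟩ ⟨w, hw, hwy⟩
    refine ⟨v + w, I.add_mem hv hw, ?_⟩
    convert I.add_mem hvx hwy using 1
    ring
  smul_mem' := by
    rintro r x ⟨v, hv, hvx⟩
    refine ⟨r * v, I.mul_mem_left r hv, ?_⟩
    simpa only [smul_eq_mul, mul_add] using I.mul_mem_left r hvx

theorem le_kClosure (I : Ideal R) : I ≤ I.kClosure :=
  fun x hx => ⟨0, I.zero_mem, by rwa [zero_add]⟩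

theorem isKIdeal_kClosure (I : Ideal R) : IsKIdeal I.kClosure := by
  rintro a b ⟨v, hv, hva⟩ ⟨w, hw, hwab⟩
  refine ⟨v + w + a, ?_, ?_⟩
  · convert I.add_mem hva hw using 1
    ring
  · convert I.add_mem hv hwab using 1
    ring

theorem kClosure_mul_le (I J : Ideal R) : I.kClosure * J ≤ (I * J).kClosure := by
  rw [mul_le]
  rintro x ⟨v, hv, hvx⟩ y hy
  refine ⟨v * y, mul_mem_mul hv hy, ?_⟩
  rw [← add_mul]
  exact mul_mem_mul hvx hy

end Ideal

open Ideal

theorem IsKIdeal.kClosure_le {I P : Ideal R} (hP : IsKIdeal P) (hIP : I ≤ P) :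
    I.kClosure ≤ P := by
  rintro x ⟨v, hv, hvx⟩
  exact hP v x (hIP hv) (hIP hvx)

theorem IsKIdeal.kClosure_mul_kClosure_le {I J P : Ideal R} (hP : IsKIdeal P)
    (hIJ : I * J ≤ P) : I.kClosure * J.kClosure ≤ P := by
  have hJ : I * J.kClosure ≤ P := by
    rw [mul_comm]
    exact (kClosure_mul_le J I).trans (hP.kClosure_le (by rwa [mul_comm]))
  exact (kClosure_mul_le I J.kClosure).trans (hP.kClosure_le hJ)

theorem IsKPrime.mem_or_mem {P : Ideal R} (hP : IsKPrime P) {a b : R} (hab : a * b ∈ P) :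
    a ∈ P ∨ b ∈ P := by
  obtain ⟨hPk, -, hprime⟩ := hP
  have hspan : span {a} * span {b} ≤ P := by
    rwa [span_singleton_mul_span_singleton, span_singleton_le_iff_mem]
  refine (hprime _ _ (isKIdeal_kClosure _) (isKIdeal_kClosure _)
    (hPk.kClosure_mul_kClosure_le hspan)).imp ?_ ?_
  all_goals exact fun h => h (le_kClosure _ (mem_span_singleton_self _))

theorem isKPrime_of_mem_or_mem {P : Ideal R} (hP : IsKIdeal P) (hproper : P ≠ ⊤)
    (hmul : ∀ a b : R, a * b ∈ P → a ∈ P ∨ b ∈ P) : IsKPrime P := by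
  refine ⟨hP, hproper, fun I J _ _ hIJ => ?_⟩
  by_contra! h
  obtain ⟨x, hxI, hxP⟩ := SetLike.not_le_iff_exists.mp h.1
  obtain ⟨y, hyJ, hyP⟩ := SetLike.not_le_iff_exists.mp h.2
  exact (hmul x y (hIJ (mul_mem_mul hxI hyJ))).elim hxP hyP

/-- A proper k-ideal `P` is k-prime if and only if its complement is a
multiplicatively closed subset of `R`. -/
theorem isKPrime_iff_compl_mulClosed (P : Ideal R) (hP : IsKIdeal P) (hproper : P ≠ ⊤) :
    IsKPrime P ↔
      ∀ a ∈ (P : Set R)ᶜ, ∀ b ∈ (P : Set R)ᶜ, a * b ∈ (P : Set R)ᶜ := by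
  simp only [Set.mem_compl_iff, SetLike.mem_coe]
  constructor
  · intro hprime a ha b hb hab
    exact (hprime.mem_or_mem hab).elim ha hb
  · intro hmul
    refine isKPrime_of_mem_or_mem hP hproper fun a b hab => ?_
    by_contra! h
    exact hmul a h.1 b h.2 hab
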